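/- Let H be a finitely generated free group and let p be a prime. Then H is residually p-finite: the intersection ⋂_{i≥1} γ^p_i(H) of the lower F_p-linear central filtration is trivial. -/

import Mathlib

/-- The lower `𝔽_p`-linear central filtration: `γ^p_1(G) = G` and
`γ^p_{i+1}(G) = ⟨[γ^p_i(G), G], x^p : x ∈ γ^p_i(G)⟩`.
Here `lowerPCentralSeries p G i` is the paper's `γ^p_{i+1}(G)`. -/
def lowerPCentralSeries (p : ℕ) (G : Type*) [Group G] : ℕ → Subgroup G
  | 0 => ⊤
  | i + 1 =>
      ⁅lowerPCentralSeries p G i, (⊤ : Subgroup G)⁆ ⊔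
        Subgroup.closure {x : G | ∃ y ∈ lowerPCentralSeries p G i, x = y ^ p}

/-!
Write `g ≠ 1` as a product of syllables `y₁ ^ e₁ ⋯ y_k ^ e_k` with `eⱼ ≠ 0` and adjacent
letters distinct, and let `ω` be the word `y₁ ^ q₁ ⋯ y_k ^ q_k` with `qⱼ = p ^ v_p(eⱼ)`.
Let a generator `y` act on `𝔽_p`-vectors indexed by the positions `0, …, |ω|` of `ω` as
`1 + N_y`, where `N_y` moves position `i` to `i + 1` whenever `ω[i] = y`. These matrices are
unitriangular, and the congruence subgroups `Uᵢ = 1 + (matrices supported on and above the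
(i+1)-st superdiagonal)` satisfy `[Uᵢ, U₀] ≤ Uᵢ₊₁` and `Uᵢ ^ p ≤ Uᵢ₊₁`, so `γ^p_{|ω|+1}` acts
trivially. On the other hand, by Frobenius `y ^ eⱼ` acts as a polynomial in `N_y ^ qⱼ` whose
linear coefficient is `eⱼ / qⱼ ≢ 0 (mod p)`; its entries only join positions separated by a run
of `y`'s, so following the row of position `0` through the syllables, the `(0, |ω|)` entry of
the image of `g` is `∏ eⱼ / qⱼ ≠ 0`.
-/

open scoped commutatorElement

theorem lowerPCentralSeries_le_comap {G H : Type*} [Group G] [Group H] (p : ℕ) (φ : G →* H)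
    (U : ℕ → Subgroup H) (hrange : φ.range ≤ U 0)
    (hcomm : ∀ i, ∀ x ∈ U i, ∀ y ∈ U 0, ⁅x, y⁆ ∈ U (i + 1))
    (hpow : ∀ i, ∀ x ∈ U i, x ^ p ∈ U (i + 1)) (i : ℕ) :
    lowerPCentralSeries p G i ≤ (U i).comap φ := by
  induction i with
  | zero => exact fun g _ => hrange ⟨g, rfl⟩
  | succ i ih =>
    rw [lowerPCentralSeries, sup_le_iff, Subgroup.commutator_le, Subgroup.closure_le]
    refine ⟨fun x hx y _ => ?_, ?_⟩
    · simpa only [Subgroup.mem_comap, map_commutatorElement] using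
        hcomm i _ (ih hx) _ (hrange ⟨y, rfl⟩)
    · rintro _ ⟨y, hy, rfl⟩
      simpa only [SetLike.mem_coe, Subgroup.mem_comap, map_pow] using hpow i _ (ih hy)

namespace Matrix

variable (R : Type*) [CommRing R] (n : ℕ)

local notation "𝕄" => Matrix (Fin n) (Fin n) R

def upperFiltration (k : ℕ) : Submodule R 𝕄 where
  carrier := {M | ∀ i j : Fin n, (j : ℕ) < i + k → M i j = 0}
  add_mem' hM hN i j hij := by simp [hM i j hij, hN i j hij]
  zero_mem' _ _ _ := rfl
  smul_mem' c M hM i j hij := by simp [hM i j hij]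

variable {R n}

theorem mem_upperFiltration {k : ℕ} {M : 𝕄} :
    M ∈ upperFiltration R n k ↔ ∀ i j : Fin n, (j : ℕ) < i + k → M i j = 0 :=
  Iff.rfl

theorem upperFiltration_antitone : Antitone (upperFiltration R n) :=
  fun _ _ hkl _ hM i j hij => hM i j (by omega)

theorem mem_upperFiltration_zero_iff {M : 𝕄} :
    M ∈ upperFiltration R n 0 ↔ M.BlockTriangular id := by
  simp only [mem_upperFiltration, add_zero, BlockTriangular, id, Fin.lt_def]

theorem one_mem_upperFiltration_zero : (1 : 𝕄) ∈ upperFiltration R n 0 :=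
  fun _ _ hij => one_apply_ne (by rintro rfl; omega)

theorem mul_mem_upperFiltration {k l : ℕ} {M N : 𝕄}
    (hM : M ∈ upperFiltration R n k) (hN : N ∈ upperFiltration R n l) :
    M * N ∈ upperFiltration R n (k + l) := by
  intro i j hij
  rw [mul_apply]
  refine Finset.sum_eq_zero fun m _ => ?_
  by_cases hm : (m : ℕ) < i + k
  · rw [hM i m hm, zero_mul]
  · rw [hN m j (by omega), mul_zero]

theorem pow_mem_upperFiltration {k : ℕ} {M : 𝕄}
    (hM : M ∈ upperFiltration R n k) (m : ℕ) : M ^ m ∈ upperFiltration R n (m * k) := by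
  induction m with
  | zero => simpa using one_mem_upperFiltration_zero (R := R) (n := n)
  | succ m ih => simpa [pow_succ, add_mul] using mul_mem_upperFiltration ih hM

theorem eq_zero_of_mem_upperFiltration {k : ℕ} (hk : n ≤ k) {M : 𝕄}
    (hM : M ∈ upperFiltration R n k) : M = 0 :=
  ext fun i j => hM i j (by omega)

theorem inv_mem_upperFiltration_zero {g : 𝕄ˣ}
    (hg : (g : 𝕄) ∈ upperFiltration R n 0) :
    ((g⁻¹ : 𝕄ˣ) : 𝕄) ∈ upperFiltration R n 0 := by
  rw [coe_units_inv, mem_upperFiltration_zero_iff] at *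
  exact blockTriangular_inv_of_blockTriangular hg

theorem mem_upperFiltration_zero_of_sub_one_mem {k : ℕ} {M : 𝕄}
    (hM : M - 1 ∈ upperFiltration R n k) : M ∈ upperFiltration R n 0 := by
  simpa using add_mem (upperFiltration_antitone (Nat.zero_le _) hM) one_mem_upperFiltration_zero

variable (R n) in
def unipotentFiltration (k : ℕ) : Subgroup 𝕄ˣ where
  carrier := {g | (g : 𝕄) - 1 ∈ upperFiltration R n (k + 1)}
  one_mem' := by simp
  mul_mem' {g h} hg hh := by
    have : ((g * h : 𝕄ˣ) : 𝕄) - 1 =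
        (g - 1) * (h - 1) + (g - 1) + (h - 1) := by
      simp only [Units.val_mul, mul_sub, sub_mul, mul_one, one_mul]; abel
    rw [Set.mem_ofPred_eq, this]
    exact add_mem (add_mem (upperFiltration_antitone (by omega) (mul_mem_upperFiltration hg hh))
      hg) hh
  inv_mem' {g} hg := by
    have : ((g⁻¹ : 𝕄ˣ) : 𝕄) - 1 =
        -(((g⁻¹ : 𝕄ˣ) : 𝕄) * (g - 1)) := by
      simp [mul_sub]
    rw [Set.mem_ofPred_eq, this]
    simpa using neg_mem (mul_mem_upperFiltration (inv_mem_upperFiltration_zero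
      (mem_upperFiltration_zero_of_sub_one_mem hg)) hg)

theorem mem_unipotentFiltration {k : ℕ} {g : 𝕄ˣ} :
    g ∈ unipotentFiltration R n k ↔ (g : 𝕄) - 1 ∈ upperFiltration R n (k + 1) :=
  Iff.rfl

theorem commutatorElement_mem_unipotentFiltration {k l : ℕ} {g h : 𝕄ˣ}
    (hg : g ∈ unipotentFiltration R n k) (hh : h ∈ unipotentFiltration R n l) :
    ⁅g, h⁆ ∈ unipotentFiltration R n (k + l + 1) := by
  rw [mem_unipotentFiltration] at *
  have hinv := mul_mem_upperFiltration
    (inv_mem_upperFiltration_zero (mem_upperFiltration_zero_of_sub_one_mem hg))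
    (inv_mem_upperFiltration_zero (mem_upperFiltration_zero_of_sub_one_mem hh))
  have hcomm := upperFiltration_antitone (show k + l + 1 + 1 ≤ k + 1 + (l + 1) by omega)
    (sub_mem (mul_mem_upperFiltration hg hh)
      (add_comm (l + 1) (k + 1) ▸ mul_mem_upperFiltration hh hg))
  have : ((⁅g, h⁆ : 𝕄ˣ) : 𝕄) - 1 =
      ((g - 1) * (h - 1) - (h - 1) * (g - 1)) * (((g⁻¹ : 𝕄ˣ) : 𝕄) * ((h⁻¹ : 𝕄ˣ) : 𝕄)) := by
    calc ((⁅g, h⁆ : 𝕄ˣ) : 𝕄) - 1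
        = ((g : 𝕄) * h - h * g) * (((g⁻¹ : 𝕄ˣ) : 𝕄) * ((h⁻¹ : 𝕄ˣ) : 𝕄)) := by
          simp [commutatorElement_def, sub_mul, mul_assoc]
      _ = ((g - 1) * (h - 1) - (h - 1) * (g - 1)) * (((g⁻¹ : 𝕄ˣ) : 𝕄) * ((h⁻¹ : 𝕄ˣ) : 𝕄)) := by
          noncomm_ring
  rw [this]
  simpa using mul_mem_upperFiltration hcomm hinv

theorem pow_mem_unipotentFiltration_succ [NeZero n] (p : ℕ) [Fact p.Prime] [CharP R p] {k : ℕ}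
    {g : 𝕄ˣ} (hg : g ∈ unipotentFiltration R n k) :
    g ^ p ∈ unipotentFiltration R n (k + 1) := by
  rw [mem_unipotentFiltration] at *
  have : ((g ^ p : 𝕄ˣ) : 𝕄) - 1 = (g - 1) ^ p := by
    have h := add_pow_char_of_commute p (Commute.one_right ((g : 𝕄) - 1))
    rw [sub_add_cancel, one_pow] at h
    rw [Units.val_pow_eq_pow_val, h, add_sub_cancel_right]
  rw [this]
  exact upperFiltration_antitone (by nlinarith [(Fact.out : p.Prime).two_le])
    (pow_mem_upperFiltration hg p)

theorem eq_one_of_mem_unipotentFiltration {k : ℕ} (hk : n ≤ k + 1)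
    {g : 𝕄ˣ} (hg : g ∈ unipotentFiltration R n k) : g = 1 :=
  Units.ext (sub_eq_zero.mp (eq_zero_of_mem_upperFiltration hk hg))

end Matrix

namespace FreeGroup

variable {ι : Type*}

def syllableProd (B : List (ι × ℤ)) : FreeGroup ι :=
  (B.map fun s => of s.1 ^ s.2).prod

@[simp]
theorem syllableProd_nil : syllableProd ([] : List (ι × ℤ)) = 1 :=
  rfl

@[simp]
theorem syllableProd_cons (s : ι × ℤ) (B : List (ι × ℤ)) :
    syllableProd (s :: B) = of s.1 ^ s.2 * syllableProd B :=
  List.prod_cons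

def IsReducedSyllables (B : List (ι × ℤ)) : Prop :=
  (∀ s ∈ B, s.2 ≠ 0) ∧ B.IsChain fun s t => s.1 ≠ t.1

theorem isReducedSyllables_cons {s : ι × ℤ} {B : List (ι × ℤ)} :
    IsReducedSyllables (s :: B) ↔
      s.2 ≠ 0 ∧ (∀ t ∈ B.head?, s.1 ≠ t.1) ∧ IsReducedSyllables B := by
  simp only [IsReducedSyllables, List.mem_cons, forall_eq_or_imp, List.isChain_cons]
  tauto

theorem exists_isReducedSyllables_syllableProd_eq_zpow_mul (x : ι) (z : ℤ) {B : List (ι × ℤ)}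
    (hB : IsReducedSyllables B) :
    ∃ C, IsReducedSyllables C ∧ syllableProd C = of x ^ z * syllableProd B := by
  by_cases hz : z = 0
  · exact ⟨B, hB, by simp [hz]⟩
  rcases B with _ | ⟨⟨y, e⟩, B⟩
  · exact ⟨[(x, z)], by simp [IsReducedSyllables, hz], by simp⟩
  obtain ⟨he, hyB, hB'⟩ := isReducedSyllables_cons.1 hB
  by_cases hxy : x = y
  · subst hxy
    by_cases hze : z + e = 0
    · exact ⟨B, hB', by simp [← mul_assoc, ← zpow_add, hze]⟩
    · exact ⟨(x, z + e) :: B, isReducedSyllables_cons.2 ⟨hze, hyB, hB'⟩,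
        by simp [← mul_assoc, ← zpow_add]⟩
  · exact ⟨(x, z) :: (y, e) :: B, isReducedSyllables_cons.2 ⟨hz, by simpa using hxy, hB⟩, rfl⟩

theorem exists_isReducedSyllables_syllableProd_eq (g : FreeGroup ι) :
    ∃ B, IsReducedSyllables B ∧ syllableProd B = g := by
  have hg : g ∈ Subgroup.closure (Set.range of) := by simp [closure_range_of]
  induction hg using Subgroup.closure_induction_left with
  | one => exact ⟨[], by simp [IsReducedSyllables], rfl⟩
  | mul_left _ hx _ _ ih =>
    obtain ⟨⟨x, rfl⟩, ⟨B, hB, rfl⟩⟩ := And.intro hx ih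
    simpa using exists_isReducedSyllables_syllableProd_eq_zpow_mul x 1 hB
  | inv_mul_cancel _ hx _ _ ih =>
    obtain ⟨⟨x, rfl⟩, ⟨B, hB, rfl⟩⟩ := And.intro hx ih
    simpa using exists_isReducedSyllables_syllableProd_eq_zpow_mul x (-1) hB

def syllableWord (p : ℕ) (B : List (ι × ℤ)) : List ι :=
  B.flatMap fun s => List.replicate (p ^ padicValInt p s.2) s.1

@[simp]
theorem syllableWord_nil (p : ℕ) : syllableWord p ([] : List (ι × ℤ)) = [] :=
  rfl

theorem syllableWord_cons (p : ℕ) (s : ι × ℤ) (B : List (ι × ℤ)) :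
    syllableWord p (s :: B) = List.replicate (p ^ padicValInt p s.2) s.1 ++ syllableWord p B :=
  List.flatMap_cons

theorem head?_syllableWord {p : ℕ} (hp : 0 < p) (B : List (ι × ℤ)) :
    (syllableWord p B).head? = B.head?.map Prod.fst := by
  rcases B with _ | ⟨s, B⟩
  · rfl
  · obtain ⟨k, hk⟩ := Nat.exists_eq_add_of_lt (pow_pos hp (padicValInt p s.2))
    simp [syllableWord_cons, hk, List.replicate_succ]

end FreeGroup

section LetterRepresentation

open Matrix FreeGroup

variable (R : Type*) [CommRing R] {ι : Type*} (ω : List ι)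

local notation "𝕄" => Matrix (Fin (ω.length + 1)) (Fin (ω.length + 1)) R

def IsLetterRun (y : ι) (a b : ℕ) : Prop := ∀ t, a ≤ t → t < b → ω[t]? = some y

theorem isLetterRun_append_replicate (α γ : List ι) (y : ι) (q : ℕ) :
    IsLetterRun (α ++ List.replicate q y ++ γ) y α.length (α.length + q) := by
  intro t h1 h2
  rw [List.append_assoc, List.getElem?_append_right h1,
    List.getElem?_append_left (by simp; omega), List.getElem?_replicate]
  simp; omega

open Classical in
noncomputable def letterShift (y : ι) : 𝕄 :=
  Matrix.of fun i j => if (j : ℕ) = i + 1 ∧ ω[(i : ℕ)]? = some y then 1 else 0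

open Classical in
theorem letterShift_apply (y : ι) (i j : Fin (ω.length + 1)) :
    letterShift R ω y i j = if (j : ℕ) = i + 1 ∧ ω[(i : ℕ)]? = some y then 1 else 0 :=
  rfl

open Classical in
theorem letterShift_pow_apply (y : ι) (s : ℕ) (i j : Fin (ω.length + 1)) :
    (letterShift R ω y ^ s) i j = if (j : ℕ) = i + s ∧ IsLetterRun ω y i j then 1 else 0 := by
  induction s generalizing j with
  | zero =>
    simp only [pow_zero, one_apply, Fin.ext_iff, add_zero]
    by_cases h : (i : ℕ) = j
    · rw [if_pos h, if_pos ⟨h.symm, fun t h1 h2 => absurd h2 (by omega)⟩]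
    · rw [if_neg h, if_neg (fun h' => h h'.1.symm)]
  | succ s ih =>
    rw [pow_succ, mul_apply]
    simp only [ih, letterShift_apply, ite_mul, one_mul, zero_mul]
    by_cases hj : (j : ℕ) = i + (s + 1) ∧ IsLetterRun ω y i j
    · rw [if_pos hj, Finset.sum_eq_single ⟨i + s, by omega⟩]
      · rw [if_pos ⟨rfl, fun t h1 h2 => hj.2 t h1 (by have : t < i + s := h2; omega)⟩,
          if_pos ⟨by simp [hj.1]; omega, hj.2 _ (by simp) (by simp [hj.1])⟩]
      · exact fun l _ hl => if_neg fun h => hl (Fin.ext h.1)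
      · simp
    · rw [if_neg hj]
      refine Finset.sum_eq_zero fun l _ => ?_
      split_ifs with h1 h2
      · refine absurd ⟨by omega, fun t ht1 ht2 => ?_⟩ hj
        rcases Nat.lt_or_ge t l with htl | htl
        · exact h1.2 t ht1 htl
        · rw [show t = l by omega]; exact h2.2
      · rfl
      · rfl

theorem letterShift_pow_eq_zero (y : ι) {s : ℕ} (hs : ω.length < s) : letterShift R ω y ^ s = 0 :=
  ext fun i j => by
    rw [letterShift_pow_apply, if_neg (fun h => by have := j.isLt; omega)]
    rfl

theorem letterShift_mem_upperFiltration (y : ι) :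
    letterShift R ω y ∈ upperFiltration R (ω.length + 1) 1 := fun i j hij => by
  rw [← pow_one (letterShift R ω y), letterShift_pow_apply, if_neg (fun h => by omega)]

noncomputable def letterRep : FreeGroup ι →* 𝕄ˣ :=
  FreeGroup.lift fun y =>
    (IsNilpotent.isUnit_one_add ⟨_, letterShift_pow_eq_zero R ω y ω.length.lt_succ_self⟩).unit

theorem val_letterRep_of (y : ι) :
    (letterRep R ω (FreeGroup.of y) : 𝕄) = 1 + letterShift R ω y := by
  rw [letterRep, FreeGroup.lift_apply_of, IsUnit.unit_spec]

theorem range_letterRep_le : (letterRep R ω).range ≤ unipotentFiltration R (ω.length + 1) 0 :=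
  FreeGroup.range_lift_le <| by
    rintro _ ⟨y, rfl⟩
    rw [SetLike.mem_coe, mem_unipotentFiltration, IsUnit.unit_spec, add_sub_cancel_left]
    exact letterShift_mem_upperFiltration R ω y

theorem letterRep_eq_one_of_mem_lowerPCentralSeries (p : ℕ) [Fact p.Prime] [CharP R p]
    {g : FreeGroup ι} (hg : g ∈ lowerPCentralSeries p (FreeGroup ι) ω.length) :
    letterRep R ω g = 1 :=
  eq_one_of_mem_unipotentFiltration le_rfl <|
    lowerPCentralSeries_le_comap p (letterRep R ω) _ (range_letterRep_le R ω)
      (fun _ _ hx _ hy => by simpa using commutatorElement_mem_unipotentFiltration hx hy)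
      (fun _ _ hx => pow_mem_unipotentFiltration_succ p hx) _ hg

theorem val_letterRep_of_pow_prime_pow (p : ℕ) [Fact p.Prime] [CharP R p] (y : ι) (v : ℕ) :
    ((letterRep R ω (FreeGroup.of y) ^ p ^ v : 𝕄ˣ) : 𝕄) = 1 + letterShift R ω y ^ p ^ v := by
  rw [Units.val_pow_eq_pow_val, val_letterRep_of,
    add_pow_char_pow_of_commute p v (Commute.one_left _), one_pow]

open Classical in
theorem one_add_letterShift_pow_pow_apply (y : ι) (q k : ℕ) (i j : Fin (ω.length + 1)) :
    ((1 + letterShift R ω y ^ q) ^ k) i j = ∑ r ∈ Finset.range (k + 1),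
      (k.choose r : R) * if (j : ℕ) = i + q * r ∧ IsLetterRun ω y i j then 1 else 0 := by
  rw [add_comm 1, (Commute.one_right _).add_pow, Matrix.sum_apply]
  refine Finset.sum_congr rfl fun r _ => ?_
  rw [one_pow, mul_one, ← pow_mul, ← Nat.cast_comm, ← nsmul_eq_mul, Matrix.smul_apply,
    letterShift_pow_apply]
  split_ifs <;> simp

theorem isLetterRun_of_one_add_letterShift_pow_pow_apply_ne_zero {y : ι} {q k : ℕ}
    {i j : Fin (ω.length + 1)} (h : ((1 + letterShift R ω y ^ q) ^ k) i j ≠ 0) :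
    IsLetterRun ω y i j := by
  rw [one_add_letterShift_pow_pow_apply] at h
  obtain ⟨r, -, hr⟩ := Finset.exists_ne_zero_of_sum_ne_zero h
  by_contra hrun
  exact hr (by simp [hrun])

theorem one_add_letterShift_pow_pow_apply_of_isLetterRun {y : ι} {q : ℕ} (hq : 0 < q) (k : ℕ)
    {i j : Fin (ω.length + 1)} (hij : (j : ℕ) = i + q) (hrun : IsLetterRun ω y i j) :
    ((1 + letterShift R ω y ^ q) ^ k) i j = k := by
  rw [one_add_letterShift_pow_pow_apply, Finset.sum_eq_single 1]
  · rw [hij] at hrun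
    simp [hij, hrun]
  · intro r _ hr
    rw [if_neg fun h => hr ?_, mul_zero]
    have : q * r = q * 1 := by omega
    exact Nat.eq_of_mul_eq_mul_left hq this
  · intro h
    obtain rfl : k = 0 := by simpa using h
    simp

theorem exists_val_letterRep_zpow_eq (p : ℕ) [hp : Fact p.Prime] [CharP R p] (y : ι) {e : ℤ}
    (he : e ≠ 0) : ∃ k : ℕ, (k : R) ≠ 0 ∧
      (letterRep R ω (FreeGroup.of y ^ e) : 𝕄) =
        (1 + letterShift R ω y ^ p ^ padicValInt p e) ^ k := by
  set v := padicValInt p e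
  obtain ⟨m, hm⟩ := padicValInt_dvd (p := p) e
  have hpm : ¬ (p : ℤ) ∣ m := by
    rintro ⟨c, rfl⟩
    have := (padicValInt_dvd_iff (v + 1) e).1 ⟨c, by rw [hm]; ring⟩
    omega
  set u := letterRep R ω (FreeGroup.of y) ^ p ^ v
  set P := p ^ (ω.length + 1)
  have hu : u ^ P = 1 := by
    refine Units.ext ?_
    rw [← pow_mul, ← pow_add, val_letterRep_of_pow_prime_pow, letterShift_pow_eq_zero, add_zero,
      Units.val_one]
    calc ω.length < p ^ (ω.length + 1) := (Nat.lt_succ_self _).trans (Nat.lt_pow_self hp.out.one_lt)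
      _ ≤ p ^ (v + (ω.length + 1)) := Nat.pow_le_pow_right hp.out.pos (by omega)
  have hmod : (((m % P).toNat : ℕ) : ℤ) = m % P :=
    Int.toNat_of_nonneg (Int.emod_nonneg _ (by simp [P, hp.out.ne_zero]))
  refine ⟨(m % P).toNat, ?_, ?_⟩
  · have hP : ((P : ℤ) : R) = 0 := by simp [P]
    rw [← Int.cast_natCast, hmod, Int.emod_def, Int.cast_sub, Int.cast_mul, hP, zero_mul, sub_zero,
      Ne, CharP.intCast_eq_zero_iff R p]
    exact hpm
  · rw [map_zpow, hm, ← Nat.cast_pow, _root_.zpow_mul, zpow_natCast, zpow_eq_zpow_emod' m hu,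
      ← hmod, zpow_natCast, Units.val_pow_eq_pow_val, val_letterRep_of_pow_prime_pow,
      Int.toNat_natCast]

def LastNonzeroAt {m : ℕ} (v : Fin m → R) (a : ℕ) : Prop :=
  ∀ j : Fin m, a ≤ j → (v j ≠ 0 ↔ (j : ℕ) = a)

theorem lastNonzeroAt_vecMul [NoZeroDivisors R] {α γ : List ι} {y : ι} {q : ℕ}
    (hω : ω = α ++ List.replicate q y ++ γ) (hα : α.getLast? ≠ some y) (hγ : γ.head? ≠ some y)
    {v : Fin (ω.length + 1) → R} (hv : LastNonzeroAt R v α.length) {g : 𝕄}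
    (hg : ∀ i j, g i j ≠ 0 → IsLetterRun ω y i j)
    (hgq : ∀ i j : Fin (ω.length + 1), (i : ℕ) = α.length → (j : ℕ) = α.length + q → g i j ≠ 0) :
    LastNonzeroAt R (v ᵥ* g) (α.length + q) := by
  have hlen : ω.length = α.length + q + γ.length := by simp [hω, Nat.add_assoc]
  have hbefore : ∀ t, t + 1 = α.length → ω[t]? ≠ some y := by
    intro t ht
    rwa [hω, List.append_assoc, List.getElem?_append_left (by omega),
      show t = α.length - 1 by omega, ← List.getLast?_eq_getElem?]
  have hafter : ω[α.length + q]? ≠ some y := by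
    rwa [hω, List.getElem?_append_right (by simp), List.length_append, List.length_replicate,
      Nat.sub_self, ← List.head?_eq_getElem?]
  have hzero : ∀ j : Fin (ω.length + 1), α.length + q ≤ j → ∀ l : Fin (ω.length + 1),
      (l : ℕ) ≠ α.length → v l * g l j = 0 := by
    intro j hj l hl
    rcases Nat.lt_or_gt_of_ne hl with hl' | hl'
    · refine mul_eq_zero_of_right _ (by_contra fun h => hbefore (α.length - 1) (by omega) ?_)
      exact hg l j h _ (by omega) (by omega)
    · exact mul_eq_zero_of_left (not_not.1 (mt (hv l hl'.le).1 hl)) _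
  intro j hj
  rw [vecMul, dotProduct, Finset.sum_eq_single ⟨α.length, by omega⟩
    (fun l _ hl => hzero j hj l fun h => hl (Fin.ext h)) (by simp)]
  constructor
  · refine fun h => by_contra fun hne => h (mul_eq_zero_of_right _ (by_contra fun h' => ?_))
    exact hafter (hg _ j h' _ (Nat.le_add_right _ _) (by omega))
  · exact fun h => mul_ne_zero ((hv _ le_rfl).2 rfl) (hgq _ _ rfl h)

theorem lastNonzeroAt_vecMul_letterRep_syllableProd (p : ℕ) [Fact p.Prime] [CharP R p]
    [NoZeroDivisors R] {B : List (ι × ℤ)} (hB : IsReducedSyllables B) {α : List ι}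
    (hω : ω = α ++ syllableWord p B) (hα : ∀ s ∈ B.head?, α.getLast? ≠ some s.1)
    {v : Fin (ω.length + 1) → R} (hv : LastNonzeroAt R v α.length) :
    LastNonzeroAt R (v ᵥ* (letterRep R ω (syllableProd B) : 𝕄)) ω.length := by
  induction B generalizing α v with
  | nil => simpa [hω] using hv
  | cons s B ih =>
    obtain ⟨y, e⟩ := s
    obtain ⟨he, hyB, hB'⟩ := isReducedSyllables_cons.1 hB
    dsimp only at he hyB
    have hp := (Fact.out : p.Prime).pos
    have hq : 0 < p ^ padicValInt p e := pow_pos hp _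
    have hω' : ω = α ++ List.replicate (p ^ padicValInt p e) y ++ syllableWord p B := by
      rw [hω, syllableWord_cons, List.append_assoc]
    obtain ⟨k, hk, hke⟩ := exists_val_letterRep_zpow_eq R ω p y he
    rw [syllableProd_cons, _root_.map_mul, Units.val_mul, ← vecMul_vecMul, hke]
    refine ih hB' hω' (fun t ht => ?_) ?_
    · rw [List.getLast?_append, List.getLast?_replicate, if_neg hq.ne', Option.some_or]
      simpa using hyB t ht
    · rw [List.length_append, List.length_replicate]
      refine lastNonzeroAt_vecMul R ω hω' (hα _ rfl) ?_ hv
        (fun i j h => isLetterRun_of_one_add_letterShift_pow_pow_apply_ne_zero R ω h)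
        (fun i j hi hj => ?_)
      · rw [head?_syllableWord hp]
        rcases B with _ | ⟨t, B⟩
        · simp
        · simpa using (hyB t rfl).symm
      · rw [one_add_letterShift_pow_pow_apply_of_isLetterRun R ω hq k (by omega)
          (hi ▸ hj ▸ hω' ▸ isLetterRun_append_replicate α _ y _)]
        exact hk

theorem letterRep_syllableProd_ne_one (p : ℕ) [Fact p.Prime] [CharP R p] [IsDomain R]
    {B : List (ι × ℤ)} (hB : IsReducedSyllables B) (hne : B ≠ []) :
    letterRep R (syllableWord p B) (syllableProd B) ≠ 1 := by
  intro h1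
  have hv : LastNonzeroAt R (Pi.single 0 1 : Fin ((syllableWord p B).length + 1) → R) 0 :=
    fun j _ => by
      rcases eq_or_ne j 0 with rfl | h
      · simp
      · simpa [Pi.single_eq_of_ne h] using h
  have h := lastNonzeroAt_vecMul_letterRep_syllableProd R (syllableWord p B) p hB (α := [])
    (List.nil_append _).symm (by simp) hv (Fin.last _) le_rfl
  have hlen : (syllableWord p B).length ≠ 0 := by
    rw [Ne, List.length_eq_zero_iff, ← List.head?_eq_none_iff,
      head?_syllableWord (Fact.out : p.Prime).pos]
    simpa using hne
  rw [h1, Units.val_one, vecMul_one] at h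
  exact h.2 rfl (by simp [Fin.ext_iff, hlen])

end LetterRepresentation

theorem freeGroup_residually_p_finite_general (ι : Type*) (p : ℕ) (hp : p.Prime) :
    (⨅ i, lowerPCentralSeries p (FreeGroup ι) i) = ⊥ := by
  have := Fact.mk hp
  refine (Subgroup.eq_bot_iff_forall _).2 fun g hg => ?_
  obtain ⟨B, hB, rfl⟩ := FreeGroup.exists_isReducedSyllables_syllableProd_eq g
  by_contra hne
  exact letterRep_syllableProd_ne_one (ZMod p) p hB (by rintro rfl; exact hne rfl)
    (letterRep_eq_one_of_mem_lowerPCentralSeries (ZMod p) _ p (Subgroup.mem_iInf.1 hg _))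

/-- A finitely generated free group is residually `p`-finite: the intersection of its
lower `𝔽_p`-linear central filtration is trivial. -/
theorem freeGroup_residually_p_finite (ι : Type*) [Finite ι] (p : ℕ) (hp : p.Prime) :
    (⨅ i, lowerPCentralSeries p (FreeGroup ι) i) = ⊥ :=
  freeGroup_residually_p_finite_general ι p hp
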